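/- Let A be a measurable subset of ℝ^N with finite Lebesgue measure, let f, f_n : A → ℝ (n ∈ ℕ) be measurable functions with f_n → f uniformly on A and with f essentially bounded on A, and let g, g_n ∈ L¹(A) with g_n → g weakly in L¹(A). Then f_n·g_n → f·g weakly in L¹(A); that is, for every essentially bounded measurable φ : A → ℝ, ∫_A φ·(f_n·g_n − f·g) dx → 0 as n → ∞. -/

import Mathlib

/-!
Write `φ (fₙ gₙ - f g) = φ (fₙ - f) gₙ + φ f (gₙ - g)`. The second term tends to `0` by weak
convergence tested against the bounded function `φ f`. For the first, the functionals
`ψ ↦ ∫ ψ gₙ` on the Banach space `L^∞` are pointwise bounded, hence uniformly bounded by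
Banach–Steinhaus, and testing them against the sign of `gₙ` shows that `‖gₙ‖₁` stays bounded.
As `φ (fₙ - f) → 0` essentially uniformly, the first term is `o(1) · sup ‖gₙ‖₁`.
-/

open MeasureTheory Filter ENNReal Topology

namespace MeasureTheory

variable {α : Type*} [MeasurableSpace α] {μ : Measure α}

lemma Lp.norm_exponent_top_le_of_ae_bound {E : Type*} [NormedAddCommGroup E] {f : Lp E ∞ μ}
    {C : ℝ} (hC : 0 ≤ C) (h : ∀ᵐ x ∂μ, ‖f x‖ ≤ C) : ‖f‖ ≤ C := by
  rw [Lp.norm_def, eLpNorm_exponent_top]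
  exact ENNReal.toReal_le_of_le_ofReal hC (eLpNormEssSup_le_of_ae_bound h)

lemma Lp.exists_measurable_ae_bound_ae_eq (φ : Lp ℝ ∞ μ) :
    ∃ ψ : α → ℝ, Measurable ψ ∧ (∃ C : ℝ, ∀ᵐ x ∂μ, |ψ x| ≤ C) ∧ φ =ᵐ[μ] ψ := by
  have hφ := (Lp.aestronglyMeasurable φ).aemeasurable
  refine ⟨hφ.mk _, hφ.measurable_mk, ⟨lpNorm (φ : α → ℝ) ∞ μ, ?_⟩, hφ.ae_eq_mk⟩
  filter_upwards [ae_le_lpNorm_exponent_top (Lp.memLp φ), hφ.ae_eq_mk] with x hx hxψ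
  rwa [← hxψ]

lemma lpPairing_mul_apply_toL1 (φ : Lp ℝ ∞ μ) {g : α → ℝ} (hg : Integrable g μ) :
    (ContinuousLinearMap.mul ℝ ℝ).lpPairing μ ∞ 1 φ (hg.toL1 g) = ∫ x, φ x * g x ∂μ := by
  rw [ContinuousLinearMap.lpPairing_eq_integral]
  exact integral_congr_ae <| hg.coeFn_toL1.mono fun x hx => by
    simp only [ContinuousLinearMap.mul_apply', hx]

lemma exists_norm_le_one_integral_mul_eq_integral_abs {g : α → ℝ}
    (hg : AEStronglyMeasurable g μ) :
    ∃ φ : Lp ℝ ∞ μ, ‖φ‖ ≤ 1 ∧ ∫ x, φ x * g x ∂μ = ∫ x, |g x| ∂μ := by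
  set s : α → ℝ := fun x => if 0 ≤ hg.mk g x then 1 else -1
  have hs_meas : Measurable s :=
    Measurable.ite (measurableSet_le measurable_const hg.stronglyMeasurable_mk.measurable)
      measurable_const measurable_const
  have hs_le : ∀ x, ‖s x‖ ≤ 1 := fun x => by by_cases h : 0 ≤ hg.mk g x <;> simp [s, h]
  have hs : MemLp s ∞ μ := memLp_top_of_bound hs_meas.aestronglyMeasurable 1 (.of_forall hs_le)
  refine ⟨hs.toLp s, Lp.norm_exponent_top_le_of_ae_bound zero_le_one ?_, integral_congr_ae ?_⟩
  · filter_upwards [hs.coeFn_toLp] with x hx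
    rw [hx]
    exact hs_le x
  · filter_upwards [hs.coeFn_toLp, hg.ae_eq_mk] with x hx hgx
    rw [hx, hgx]
    by_cases h : 0 ≤ hg.mk g x
    · simp [s, h, abs_of_nonneg h]
    · simp [s, h, abs_of_neg (not_le.mp h)]

lemma exists_integral_abs_le_of_bddAbove_abs_integral_mul {ι : Type*} {g : ι → α → ℝ}
    (hg : ∀ i, Integrable (g i) μ)
    (h : ∀ φ : α → ℝ, Measurable φ → (∃ C : ℝ, ∀ᵐ x ∂μ, |φ x| ≤ C) →
      BddAbove (Set.range fun i => |∫ x, φ x * g i x ∂μ|)) :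
    ∃ C : ℝ, ∀ i, ∫ x, |g i x| ∂μ ≤ C := by
  let T : ι → Lp ℝ ∞ μ →L[ℝ] ℝ := fun i =>
    ((ContinuousLinearMap.mul ℝ ℝ).lpPairing μ ∞ 1).flip ((hg i).toL1 _)
  have hT : ∀ i φ, T i φ = ∫ x, φ x * g i x ∂μ := fun i φ => lpPairing_mul_apply_toL1 φ (hg i)
  obtain ⟨C, hC⟩ := banach_steinhaus (g := T) fun φ => by
    obtain ⟨ψ, hψ, hψ_bdd, hφψ⟩ := Lp.exists_measurable_ae_bound_ae_eq φ
    obtain ⟨C, hC⟩ := h ψ hψ hψ_bdd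
    refine ⟨C, fun i => ?_⟩
    rw [hT, integral_congr_ae (hφψ.mono fun x hx => by rw [hx])]
    exact hC ⟨i, rfl⟩
  refine ⟨C, fun i => ?_⟩
  obtain ⟨φ, hφ_norm, hφ⟩ := exists_norm_le_one_integral_mul_eq_integral_abs (hg i).1
  calc ∫ x, |g i x| ∂μ = T i φ := by rw [hT, hφ]
    _ ≤ ‖T i φ‖ := le_abs_self _
    _ ≤ ‖T i‖ * ‖φ‖ := (T i).le_opNorm φ
    _ ≤ C := (mul_le_of_le_one_right (norm_nonneg _) hφ_norm).trans (hC i)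

lemma abs_integral_mul_le_of_ae_abs_le {h g : α → ℝ} {c : ℝ} (hg : Integrable g μ)
    (hh : ∀ᵐ x ∂μ, |h x| ≤ c) : |∫ x, h x * g x ∂μ| ≤ c * ∫ x, |g x| ∂μ := by
  rw [← integral_const_mul c, ← Real.norm_eq_abs]
  refine norm_integral_le_of_norm_le (hg.abs.const_mul c) ?_
  filter_upwards [hh] with x hx
  rw [norm_mul, Real.norm_eq_abs, Real.norm_eq_abs]
  exact mul_le_mul_of_nonneg_right hx (abs_nonneg _)

lemma tendsto_integral_mul_of_forall_eventually_ae_abs_le {ι : Type*} {l : Filter ι}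
    {h g : ι → α → ℝ} {C : ℝ} (hg : ∀ i, Integrable (g i) μ) (hC : ∀ i, ∫ x, |g i x| ∂μ ≤ C)
    (hh : ∀ ε > 0, ∀ᶠ i in l, ∀ᵐ x ∂μ, |h i x| ≤ ε) :
    Tendsto (fun i => ∫ x, h i x * g i x ∂μ) l (𝓝 0) := by
  rw [Metric.tendsto_nhds]
  intro ε hε
  filter_upwards [hh (ε / (|C| + 1)) (by positivity)] with i hi
  rw [Real.dist_0_eq_abs]
  calc |∫ x, h i x * g i x ∂μ| ≤ ε / (|C| + 1) * ∫ x, |g i x| ∂μ :=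
        abs_integral_mul_le_of_ae_abs_le (hg i) hi
    _ ≤ ε / (|C| + 1) * |C| := by gcongr; exact (hC i).trans (le_abs_self C)
    _ < ε := by
        rw [div_mul_eq_mul_div, div_lt_iff₀ (by positivity)]
        linarith

lemma eventually_ae_abs_mul_sub_le_of_tendstoUniformlyOn {ι : Type*} {l : Filter ι}
    {s : Set α} {φ f : α → ℝ} {F : ι → α → ℝ} {C : ℝ} (hs : ∀ᵐ x ∂μ, x ∈ s)
    (hF : TendstoUniformlyOn F f l s) (hφ : ∀ᵐ x ∂μ, |φ x| ≤ C) :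
    ∀ ε > 0, ∀ᶠ i in l, ∀ᵐ x ∂μ, |φ x * (F i x - f x)| ≤ ε := by
  intro ε hε
  filter_upwards [Metric.tendstoUniformlyOn_iff.mp hF (ε / (|C| + 1)) (by positivity)] with i hi
  filter_upwards [hs, hφ] with x hxs hφx
  have hFx := hi x hxs
  rw [Real.dist_eq, abs_sub_comm] at hFx
  calc |φ x * (F i x - f x)| = |φ x| * |F i x - f x| := abs_mul _ _
    _ ≤ |C| * (ε / (|C| + 1)) :=
        mul_le_mul (hφx.trans (le_abs_self C)) hFx.le (abs_nonneg _) (abs_nonneg _)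
    _ ≤ ε := by
        rw [mul_div_assoc', div_le_iff₀ (by positivity)]
        linarith

lemma integral_mul_mul_sub_mul_eq {φ f F g G : α → ℝ}
    (h₁ : Integrable (fun x => φ x * (F x - f x) * G x) μ)
    (h₂ : Integrable (fun x => φ x * f x * G x) μ) (h₃ : Integrable (fun x => φ x * f x * g x) μ) :
    ∫ x, φ x * (F x * G x - f x * g x) ∂μ
      = ∫ x, φ x * (F x - f x) * G x ∂μ
        + (∫ x, φ x * f x * G x ∂μ - ∫ x, φ x * f x * g x ∂μ) := by
  rw [← integral_sub h₂ h₃, ← integral_add h₁ (h₂.sub h₃ : Integrable (fun x => _ - _) μ)]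
  congr 1
  ext x
  ring

end MeasureTheory

theorem weak_strong_product_convergence_general {N : ℕ} (A : Set (Fin N → ℝ))
    (hA : MeasurableSet A)
    (f : (Fin N → ℝ) → ℝ) (fn : ℕ → (Fin N → ℝ) → ℝ)
    (hf : Measurable f) (hfn : ∀ n, Measurable (fn n))
    (hunif : TendstoUniformlyOn (fun n x => fn n x) f atTop A)
    (hfb : ∃ C : ℝ, ∀ᵐ x ∂(volume.restrict A), |f x| ≤ C)
    (g : (Fin N → ℝ) → ℝ) (gn : ℕ → (Fin N → ℝ) → ℝ)
    (hg : IntegrableOn g A) (hgn : ∀ n, IntegrableOn (gn n) A)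
    (hweak_g : ∀ φ : (Fin N → ℝ) → ℝ, Measurable φ →
      (∃ C : ℝ, ∀ᵐ x ∂(volume.restrict A), |φ x| ≤ C) →
      Tendsto (fun n => ∫ x in A, φ x * gn n x) atTop
        (nhds (∫ x in A, φ x * g x))) :
    ∀ φ : (Fin N → ℝ) → ℝ, Measurable φ →
      (∃ C : ℝ, ∀ᵐ x ∂(volume.restrict A), |φ x| ≤ C) →
      Tendsto (fun n => ∫ x in A, φ x * (fn n x * gn n x - f x * g x)) atTop
        (nhds 0) := by
  intro φ hφ ⟨Cφ, hCφ⟩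
  obtain ⟨Cf, hCf⟩ := hfb
  have hφf : ∀ᵐ x ∂(volume.restrict A), |φ x * f x| ≤ Cφ * Cf := by
    filter_upwards [hCφ, hCf] with x hφx hfx
    rw [abs_mul]
    exact mul_le_mul hφx hfx (abs_nonneg _) ((abs_nonneg _).trans hφx)
  obtain ⟨C, hC⟩ := exists_integral_abs_le_of_bddAbove_abs_integral_mul hgn
    fun ψ hψ hψ_bdd => (hweak_g ψ hψ hψ_bdd).abs.bddAbove_range
  have h_small := eventually_ae_abs_mul_sub_le_of_tendstoUniformlyOn (ae_restrict_mem hA) hunif hCφ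
  have h_first := tendsto_integral_mul_of_forall_eventually_ae_abs_le hgn hC h_small
  have h_second : Tendsto (fun n => (∫ x in A, φ x * f x * gn n x) - ∫ x in A, φ x * f x * g x)
      atTop (𝓝 0) := by
    simpa using (hweak_g _ (hφ.mul hf) ⟨_, hφf⟩).sub_const (∫ x in A, φ x * f x * g x)
  refine (add_zero (0 : ℝ) ▸ h_first.add h_second).congr' ?_
  filter_upwards [h_small 1 one_pos] with n hn
  exact (integral_mul_mul_sub_mul_eq ((hgn n).bdd_mul (by fun_prop) hn)
    ((hgn n).bdd_mul (by fun_prop) hφf) (hg.bdd_mul (by fun_prop) hφf)).symm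

/-- **Key step of the weak–a.e. convergence lemma.**
If `A ⊆ ℝ^N` is measurable with finite measure, `fₙ → f` uniformly on `A`
with `f` essentially bounded on `A`, and `gₙ ⇀ g` weakly in `L¹(A)`, then
`fₙ·gₙ ⇀ f·g` weakly in `L¹(A)`: for every essentially bounded measurable
`φ`, `∫_A φ·(fₙ·gₙ − f·g) dx → 0`. -/
theorem weak_strong_product_convergence {N : ℕ} (A : Set (Fin N → ℝ))
    (hA : MeasurableSet A) (hAfin : volume A < ⊤)
    (f : (Fin N → ℝ) → ℝ) (fn : ℕ → (Fin N → ℝ) → ℝ)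
    (hf : Measurable f) (hfn : ∀ n, Measurable (fn n))
    (hunif : TendstoUniformlyOn (fun n x => fn n x) f atTop A)
    (hfb : ∃ C : ℝ, ∀ᵐ x ∂(volume.restrict A), |f x| ≤ C)
    (g : (Fin N → ℝ) → ℝ) (gn : ℕ → (Fin N → ℝ) → ℝ)
    (hg : IntegrableOn g A) (hgn : ∀ n, IntegrableOn (gn n) A)
    (hweak_g : ∀ φ : (Fin N → ℝ) → ℝ, Measurable φ →
      (∃ C : ℝ, ∀ᵐ x ∂(volume.restrict A), |φ x| ≤ C) →
      Tendsto (fun n => ∫ x in A, φ x * gn n x) atTop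
        (nhds (∫ x in A, φ x * g x))) :
    ∀ φ : (Fin N → ℝ) → ℝ, Measurable φ →
      (∃ C : ℝ, ∀ᵐ x ∂(volume.restrict A), |φ x| ≤ C) →
      Tendsto (fun n => ∫ x in A, φ x * (fn n x * gn n x - f x * g x)) atTop
        (nhds 0) :=
  weak_strong_product_convergence_general A hA f fn hf hfn hunif hfb g gn hg hgn hweak_g
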